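/- Fix a real s > 1, r̄ > 0, h̄ ∈ (0,1) and ȳ'' ∈ ℝ^{N−3}. Then lim_{k→∞} k^{−s} ∑_{j=2}^{k} |x_j^+ − x_1^+|^{−s} = 2 ζ(s) / (2π r̄ √(1−h̄²))^s, where ζ(s) = ∑_{n=1}^{∞} n^{−s}. -/

import Mathlib

open Real Filter

/-- The point `x_j^±` on the top (`sgn = 1`) or bottom (`sgn = -1`) circle of the cylinder:
`(r√(1-h²)cos(2(j-1)π/k), r√(1-h²)sin(2(j-1)π/k), sgn·r·h, y'') ∈ ℝ³ × ℝ^{N-3}`. -/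
noncomputable def xpt (N k : ℕ) (r h : ℝ) (y'' : Fin (N-3) → ℝ) (sgn : ℝ) (j : ℕ) :
    EuclideanSpace ℝ (Fin N) :=
  (WithLp.equiv 2 (Fin N → ℝ)).symm fun i =>
    if hi : (i : ℕ) < 3 then
      if (i : ℕ) = 0 then r * Real.sqrt (1 - h^2) * Real.cos (2*((j:ℝ)-1)*Real.pi/k)
      else if (i : ℕ) = 1 then r * Real.sqrt (1 - h^2) * Real.sin (2*((j:ℝ)-1)*Real.pi/k)
      else sgn * (r * h)
    else y'' ⟨(i : ℕ) - 3, by have := i.isLt; omega⟩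

private lemma sin_lim (c : ℝ) (hc : 0 < c) :
    Tendsto (fun k : ℕ => (k:ℝ) * Real.sin (c / k)) atTop (nhds c) := by
  have hd : HasDerivAt Real.sin 1 0 := by simpa using Real.hasDerivAt_sin 0
  rw [hasDerivAt_iff_tendsto_slope] at hd
  have h1 : Tendsto (fun x : ℝ => Real.sin x / x) (nhdsWithin 0 {(0:ℝ)}ᶜ) (nhds 1) := by
    refine hd.congr fun x => ?_
    simp [slope_def_field]
  have h2 : Tendsto (fun k : ℕ => c / (k:ℝ)) atTop (nhdsWithin 0 {(0:ℝ)}ᶜ) := by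
    rw [tendsto_nhdsWithin_iff]
    refine ⟨tendsto_const_div_atTop_nhds_zero_nat c, ?_⟩
    filter_upwards [Filter.eventually_gt_atTop 0] with k hk
    have : (0:ℝ) < k := by exact_mod_cast hk
    exact Set.mem_compl_singleton_iff.2 (ne_of_gt (div_pos hc this))
  have h3 := (h1.comp h2).const_mul c
  rw [mul_one] at h3
  refine h3.congr' ?_
  filter_upwards [Filter.eventually_gt_atTop 0] with k hk
  have hk' : (0:ℝ) < k := by exact_mod_cast hk
  have hck : c / (k:ℝ) ≠ 0 := ne_of_gt (div_pos hc hk')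
  simp only [Function.comp_apply]
  field_simp

private lemma xpt_norm (N k : ℕ) (hN : 4 ≤ N) (r h : ℝ) (y'' : Fin (N-3) → ℝ) (j : ℕ)
    (hθ1 : 0 ≤ ((j:ℝ)-1)*π/k) (hθ2 : ((j:ℝ)-1)*π/k ≤ π) (hρ : 0 ≤ r * Real.sqrt (1 - h^2)) :
    ‖xpt N k r h y'' 1 j - xpt N k r h y'' 1 1‖
      = 2 * (r * Real.sqrt (1-h^2)) * Real.sin (((j:ℝ)-1)*π/k) := by
  set ρ := r * Real.sqrt (1-h^2) with hρdef
  set θ : ℝ := 2*((j:ℝ)-1)*π/k with hθdef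
  have hhalf : ((j:ℝ)-1)*π/k = θ/2 := by rw [hθdef]; ring
  have key : ∀ i : Fin N, (xpt N k r h y'' 1 j - xpt N k r h y'' 1 1) i
      = if (i:ℕ) = 0 then ρ*(Real.cos θ - 1) else if (i:ℕ) = 1 then ρ * Real.sin θ else 0 := by
    intro i
    have hz : 2*(((1:ℕ):ℝ)-1)*π/(k:ℝ) = 0 := by push_cast; ring
    simp only [xpt, PiLp.sub_apply, WithLp.equiv_symm_apply, PiLp.toLp_apply]
    rcases lt_or_ge (i:ℕ) 3 with h3 | h3
    · rw [dif_pos h3, dif_pos h3]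
      have : (i:ℕ) = 0 ∨ (i:ℕ) = 1 ∨ (i:ℕ) = 2 := by omega
      rcases this with h0 | h1 | h2
      · rw [if_pos h0, if_pos h0, if_pos h0, hz, Real.cos_zero, ← hθdef]; ring
      · rw [if_neg (by omega), if_pos h1, if_neg (by omega), if_pos h1,
          if_neg (by omega), if_pos h1, hz, Real.sin_zero, ← hθdef]; ring
      · rw [if_neg (by omega), if_neg (by omega), if_neg (by omega), if_neg (by omega),
          if_neg (by omega), if_neg (by omega)]; ring
    · rw [dif_neg (not_lt.2 h3), dif_neg (not_lt.2 h3),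
        if_neg (by omega : ¬ (i:ℕ) = 0), if_neg (by omega : ¬ (i:ℕ) = 1)]
      ring
  rw [EuclideanSpace.norm_eq]
  simp only [key]
  have hsum : ∑ i : Fin N,
      ‖(if (i:ℕ) = 0 then ρ*(Real.cos θ - 1) else if (i:ℕ) = 1 then ρ * Real.sin θ else 0)‖^2
      = ‖ρ*(Real.cos θ - 1)‖^2 + ‖ρ * Real.sin θ‖^2 := by
    rw [← Finset.sum_subset (Finset.subset_univ ({⟨0, by omega⟩, ⟨1, by omega⟩} : Finset (Fin N)))
      (fun i _ hi => ?_)]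
    · rw [Finset.sum_insert (by simp [Fin.ext_iff]), Finset.sum_singleton]
      norm_num
    · have h0 : (i:ℕ) ≠ 0 := fun hc => hi (by simp [Fin.ext_iff, hc])
      have h1 : (i:ℕ) ≠ 1 := fun hc => hi (by simp [Fin.ext_iff, hc])
      rw [if_neg h0, if_neg h1, norm_zero]
      norm_num
  rw [hsum]
  have hid : ‖ρ*(Real.cos θ - 1)‖^2 + ‖ρ * Real.sin θ‖^2 = (2 * ρ * Real.sin (θ/2))^2 := by
    rw [Real.norm_eq_abs, Real.norm_eq_abs, sq_abs, sq_abs]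
    have hc := Real.cos_sq (θ/2)
    have hs := Real.sin_sq_add_cos_sq θ
    have h2 : 2*(θ/2) = θ := by ring
    rw [h2] at hc
    have hs2 := Real.sin_sq_add_cos_sq (θ/2)
    have hhalfsq : Real.sin (θ/2)^2 = (1 - Real.cos θ)/2 := by linarith
    linear_combination ρ^2 * hs - 4*ρ^2*hhalfsq
  rw [hid, Real.sqrt_sq_eq_abs, hhalf]
  have : 0 ≤ Real.sin (θ/2) := Real.sin_nonneg_of_nonneg_of_le_pi (hhalf ▸ hθ1) (hhalf ▸ hθ2)
  exact abs_of_nonneg (by positivity)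

private lemma fold_sum (k : ℕ) (u : ℕ → ℝ) (hsym : ∀ m, 1 ≤ m → m ≤ k-1 → u (k-m) = u m) :
    ∑ m ∈ Finset.Icc 1 (k-1), u m
      = ∑ m ∈ Finset.Icc 1 k, (if 2*m < k then 2 * u m else if 2*m = k then u m else 0) := by
  rcases Nat.eq_zero_or_pos k with rfl | hk
  · simp
  have hins : Finset.Icc 1 k = insert k (Finset.Icc 1 (k-1)) := by
    ext m; simp [Finset.mem_Icc]; omega
  have hknot : k ∉ Finset.Icc 1 (k-1) := by simp [Finset.mem_Icc]; omega
  rw [hins, Finset.sum_insert hknot, if_neg (by omega), if_neg (by omega), zero_add]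
  have hsplit1 : ∑ m ∈ Finset.Icc 1 (k-1), u m
      = ∑ m ∈ (Finset.Icc 1 (k-1)).filter (fun m => 2*m < k), u m
        + ∑ m ∈ (Finset.Icc 1 (k-1)).filter (fun m => ¬ 2*m < k), u m :=
    (Finset.sum_filter_add_sum_filter_not _ _ u).symm
  have hset1 : ((Finset.Icc 1 (k-1)).filter (fun m => ¬ 2*m < k)).filter (fun m => 2*m = k)
      = (Finset.Icc 1 (k-1)).filter (fun m => 2*m = k) := by
    ext m; simp only [Finset.mem_filter, Finset.mem_Icc]; omega
  have hset2 : ((Finset.Icc 1 (k-1)).filter (fun m => ¬ 2*m < k)).filter (fun m => ¬ 2*m = k)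
      = (Finset.Icc 1 (k-1)).filter (fun m => k < 2*m) := by
    ext m; simp only [Finset.mem_filter, Finset.mem_Icc]; omega
  have hsplit2 : ∑ m ∈ (Finset.Icc 1 (k-1)).filter (fun m => ¬ 2*m < k), u m
      = ∑ m ∈ (Finset.Icc 1 (k-1)).filter (fun m => 2*m = k), u m
        + ∑ m ∈ (Finset.Icc 1 (k-1)).filter (fun m => k < 2*m), u m := by
    rw [← hset1, ← hset2]
    exact (Finset.sum_filter_add_sum_filter_not _ _ u).symm
  have hrefl : ∑ m ∈ (Finset.Icc 1 (k-1)).filter (fun m => k < 2*m), u m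
      = ∑ m ∈ (Finset.Icc 1 (k-1)).filter (fun m => 2*m < k), u m := by
    refine Finset.sum_nbij' (i := fun m => k - m) (j := fun m => k - m) ?_ ?_ ?_ ?_ ?_
    · intro a ha
      simp only [Finset.mem_filter, Finset.mem_Icc] at ha ⊢; omega
    · intro a ha
      simp only [Finset.mem_filter, Finset.mem_Icc] at ha ⊢; omega
    · intro a ha
      simp only [Finset.mem_filter, Finset.mem_Icc] at ha
      show k - (k - a) = a; omega
    · intro a ha
      simp only [Finset.mem_filter, Finset.mem_Icc] at ha
      show k - (k - a) = a; omega
    · intro a ha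
      simp only [Finset.mem_filter, Finset.mem_Icc] at ha
      exact (hsym a ha.1.1 ha.1.2).symm
  have hrhs : ∑ m ∈ Finset.Icc 1 (k-1), (if 2*m < k then 2 * u m else if 2*m = k then u m else 0)
      = ∑ m ∈ (Finset.Icc 1 (k-1)).filter (fun m => 2*m < k), 2 * u m
        + ∑ m ∈ (Finset.Icc 1 (k-1)).filter (fun m => 2*m = k), u m := by
    rw [Finset.sum_ite]
    congr 1
    rw [Finset.sum_ite, ← hset1, Finset.sum_const_zero, add_zero]
  rw [hrhs, hsplit1, hsplit2, hrefl, ← Finset.mul_sum]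
  ring

theorem stmt14 (N : ℕ) (hN : 4 ≤ N) (s : ℝ) (hs : 1 < s) (r h : ℝ)
    (hr : 0 < r) (hh : h ∈ Set.Ioo (0:ℝ) 1) (y'' : Fin (N-3) → ℝ) :
    Filter.Tendsto (fun k : ℕ =>
        (k:ℝ) ^ (-s) * ∑ j ∈ Finset.Icc 2 k,
          ‖xpt N k r h y'' 1 j - xpt N k r h y'' 1 1‖ ^ (-s))
      Filter.atTop
      (nhds (2 * (∑' n : ℕ, ((n:ℝ)+1) ^ (-s)) /
        (2 * Real.pi * r * Real.sqrt (1 - h^2)) ^ s)) := by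
  obtain ⟨hh0, hh1⟩ := hh
  have hπ := Real.pi_pos
  have hsq : (0:ℝ) < Real.sqrt (1 - h ^ 2) := Real.sqrt_pos.2 (by nlinarith)
  set ρ : ℝ := r * Real.sqrt (1 - h ^ 2) with hρdef
  have hρ : 0 < ρ := mul_pos hr hsq
  set u : ℕ → ℕ → ℝ :=
    fun k m => (2*ρ)^(-s) * ((k:ℝ) * Real.sin ((m:ℝ) * π / k))^(-s) with hu
  set g : ℕ → ℕ → ℝ := fun k n =>
    if 2*(n+1) < k then 2 * u k (n+1) else if 2*(n+1) = k then u k (n+1) else 0 with hg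
  set L : ℕ → ℝ := fun n => 2 * ((2*ρ)^(-s) * (((n:ℝ)+1)*π)^(-s)) with hL
  set bound : ℕ → ℝ := fun n => 2 * (2*ρ)^(-s) * ((2:ℝ)*((n:ℝ)+1))^(-s) with hbnd
  -- summability of the bound
  have hζ : Summable (fun n : ℕ => ((n:ℝ)+1)^(-s)) := by
    have h1 : Summable (fun n : ℕ => ((n:ℝ))^(-s)) :=
      Real.summable_nat_rpow.mpr (by linarith)
    have h2 := h1.comp_injective Nat.succ_injective
    refine h2.congr fun n => ?_
    simp [Nat.succ_eq_add_one]
  have hsummable : Summable bound := by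
    have heq : ∀ n : ℕ, bound n = (2 * (2*ρ)^(-s) * (2:ℝ)^(-s)) * (((n:ℝ)+1)^(-s)) := by
      intro n
      show 2 * (2*ρ)^(-s) * ((2:ℝ)*((n:ℝ)+1))^(-s) = _
      rw [show ((2:ℝ)*((n:ℝ)+1))^(-s) = (2:ℝ)^(-s)*(((n:ℝ)+1))^(-s) from
        Real.mul_rpow (by norm_num) (by positivity)]
      ring
    exact Summable.congr (hζ.mul_left _) (fun n => (heq n).symm)
  -- pointwise limit
  have hlim : ∀ n : ℕ, Tendsto (fun k : ℕ => g k n) atTop (nhds (L n)) := by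
    intro n
    have hc : (0:ℝ) < ((n:ℝ)+1)*π := by positivity
    have h1 := sin_lim (((n:ℝ)+1)*π) hc
    have h2 : ContinuousAt (fun x : ℝ => x^(-s)) (((n:ℝ)+1)*π) :=
      Real.continuousAt_rpow_const _ _ (Or.inl hc.ne')
    have h3 := (h2.tendsto.comp h1).const_mul ((2*ρ)^(-s))
    have h4 := h3.const_mul (2:ℝ)
    refine h4.congr' ?_
    filter_upwards [Filter.eventually_gt_atTop (2*(n+1))] with k hk
    rw [hg]
    simp only
    rw [if_pos hk, hu]
    simp only [Function.comp]
    have : ((n+1:ℕ):ℝ) * π / (k:ℝ) = (((n:ℝ)+1)*π) / (k:ℝ) := by push_cast; ring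
    rw [this]
  -- bound
  have hbound : ∀ᶠ k : ℕ in atTop, ∀ n : ℕ, ‖g k n‖ ≤ bound n := by
    filter_upwards [Filter.eventually_ge_atTop 1] with k hk1 n
    have hkpos : (0:ℝ) < (k:ℝ) := by exact_mod_cast hk1
    have hub : 2*(n+1) ≤ k → u k (n+1) ≤ (2*ρ)^(-s) * ((2:ℝ)*((n:ℝ)+1))^(-s) := by
      intro hle
      have hcast : 2*((n:ℝ)+1) ≤ (k:ℝ) := by exact_mod_cast hle
      have hx1 : (0:ℝ) ≤ ((n+1:ℕ):ℝ) * π / (k:ℝ) := by positivity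
      have hx2 : ((n+1:ℕ):ℝ) * π / (k:ℝ) ≤ π/2 := by
        rw [div_le_div_iff₀ hkpos (by norm_num : (0:ℝ) < 2)]
        push_cast
        nlinarith
      have hsin := Real.mul_le_sin hx1 hx2
      have hks : 2*((n:ℝ)+1) ≤ (k:ℝ) * Real.sin (((n+1:ℕ):ℝ) * π / (k:ℝ)) := by
        have h5 : (k:ℝ) * (2/π * (((n+1:ℕ):ℝ) * π / (k:ℝ))) = 2*((n:ℝ)+1) := by
          push_cast
          field_simp
        calc 2*((n:ℝ)+1) = (k:ℝ) * (2/π * (((n+1:ℕ):ℝ) * π / (k:ℝ))) := h5.symm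
          _ ≤ (k:ℝ) * Real.sin (((n+1:ℕ):ℝ) * π / (k:ℝ)) :=
            mul_le_mul_of_nonneg_left hsin hkpos.le
      have := Real.rpow_le_rpow_of_nonpos (by positivity : (0:ℝ) < 2*((n:ℝ)+1)) hks
        (by linarith : -s ≤ 0)
      rw [hu]
      exact mul_le_mul_of_nonneg_left this (Real.rpow_nonneg (by positivity) _)
    have hun : 2*(n+1) ≤ k → 0 ≤ u k (n+1) := by
      intro hle
      rw [hu]
      simp only
      have hx1 : (0:ℝ) ≤ ((n+1:ℕ):ℝ) * π / (k:ℝ) := by positivity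
      have hx2 : ((n+1:ℕ):ℝ) * π / (k:ℝ) ≤ π := by
        rw [div_le_iff₀ hkpos]
        have : ((n+1:ℕ):ℝ) ≤ (k:ℝ) := by exact_mod_cast (by omega : n+1 ≤ k)
        nlinarith [Real.pi_pos]
      have hsin : 0 ≤ Real.sin (((n+1:ℕ):ℝ) * π / (k:ℝ)) :=
        Real.sin_nonneg_of_nonneg_of_le_pi hx1 hx2
      positivity
    rw [hg]
    simp only
    split_ifs with hlt heq
    · rw [Real.norm_eq_abs, abs_of_nonneg (by linarith [hun (le_of_lt hlt)])]
      show 2 * u k (n+1) ≤ 2 * (2*ρ)^(-s) * ((2:ℝ)*((n:ℝ)+1))^(-s)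
      linarith [hub hlt.le]
    · rw [Real.norm_eq_abs, abs_of_nonneg (hun heq.le)]
      show u k (n+1) ≤ 2 * (2*ρ)^(-s) * ((2:ℝ)*((n:ℝ)+1))^(-s)
      have h1 := hub heq.le
      have h2 : (0:ℝ) ≤ (2*ρ)^(-s) * ((2:ℝ)*((n:ℝ)+1))^(-s) := by positivity
      linarith
    · rw [norm_zero]
      show (0:ℝ) ≤ 2 * (2*ρ)^(-s) * ((2:ℝ)*((n:ℝ)+1))^(-s)
      positivity
  have main := tendsto_tsum_of_dominated_convergence hsummable hlim hbound
  -- value of the limit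
  have hLsum : ∑' n, L n
      = 2 * (∑' n : ℕ, ((n:ℝ)+1)^(-s)) / (2 * π * r * Real.sqrt (1 - h^2))^s := by
    have hkey : (2*ρ)^(-s) * π^(-s) = ((2 * π * r * Real.sqrt (1-h^2))^s)⁻¹ := by
      have hbase : (2*ρ)*π = 2 * π * r * Real.sqrt (1-h^2) := by rw [hρdef]; ring
      rw [← Real.mul_rpow (by positivity) (by positivity : (0:ℝ) ≤ π), hbase,
        Real.rpow_neg (by positivity)]
    have hLn : ∀ n : ℕ, L n = (2 * ((2*π*r*Real.sqrt (1-h^2))^s)⁻¹) * (((n:ℝ)+1)^(-s)) := by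
      intro n
      show 2 * ((2*ρ)^(-s) * (((n:ℝ)+1)*π)^(-s)) = _
      rw [show (((n:ℝ)+1)*π)^(-s) = (((n:ℝ)+1))^(-s) * π^(-s) from
        Real.mul_rpow (by positivity) (by positivity : (0:ℝ) ≤ π)]
      calc 2 * ((2*ρ)^(-s) * ((((n:ℝ)+1))^(-s) * π^(-s)))
          = 2 * (((2*ρ)^(-s) * π^(-s)) * (((n:ℝ)+1))^(-s)) := by ring
        _ = _ := by rw [hkey]; ring
    rw [tsum_congr hLn, tsum_mul_left, div_eq_mul_inv]
    ring
  rw [hLsum] at main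
  refine main.congr' ?_
  filter_upwards [Filter.eventually_ge_atTop 2] with k hk2
  have hkpos : (0:ℝ) < (k:ℝ) := by exact_mod_cast (by omega : 0 < k)
  have hk0 : (k:ℝ) ≠ 0 := hkpos.ne'
  have hsym : ∀ m, 1 ≤ m → m ≤ k-1 → u k (k-m) = u k m := by
    intro m h1 h2
    have hang : ((k-m:ℕ):ℝ)*π/(k:ℝ) = π - (m:ℝ)*π/(k:ℝ) := by
      rw [Nat.cast_sub (by omega : m ≤ k)]
      field_simp
    show (2*ρ)^(-s) * ((k:ℝ) * Real.sin (((k-m:ℕ):ℝ) * π / k))^(-s) = _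
    rw [hang, Real.sin_pi_sub]
  have step1 : ∑' n, g k n = ∑ n ∈ Finset.range k, g k n := by
    refine tsum_eq_sum (fun n hn => ?_)
    rw [Finset.mem_range, not_lt] at hn
    show (if 2*(n+1) < k then 2 * u k (n+1) else if 2*(n+1) = k then u k (n+1) else 0) = 0
    rw [if_neg (by omega), if_neg (by omega)]
  have step2 : ∑ n ∈ Finset.range k, g k n
      = ∑ m ∈ Finset.Icc 1 k, (if 2*m < k then 2 * u k m else if 2*m = k then u k m else 0) := by
    refine Finset.sum_nbij' (i := fun n => n+1) (j := fun m => m-1) ?_ ?_ ?_ ?_ ?_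
    · intro a ha
      simp only [Finset.mem_range] at ha
      simp only [Finset.mem_Icc]; omega
    · intro a ha
      simp only [Finset.mem_Icc] at ha
      simp only [Finset.mem_range]; omega
    · intro a _
      show a + 1 - 1 = a; omega
    · intro a ha
      simp only [Finset.mem_Icc] at ha
      show a - 1 + 1 = a; omega
    · intro a _
      rfl
  have step3 := fold_sum k (u k) hsym
  have step4 : (k:ℝ)^(-s) * ∑ j ∈ Finset.Icc 2 k,
      ‖xpt N k r h y'' 1 j - xpt N k r h y'' 1 1‖^(-s) = ∑ m ∈ Finset.Icc 1 (k-1), u k m := by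
    rw [Finset.mul_sum]
    refine (Finset.sum_nbij' (i := fun m => m+1) (j := fun j => j-1) ?_ ?_ ?_ ?_ ?_).symm
    · intro a ha
      simp only [Finset.mem_Icc] at ha
      simp only [Finset.mem_Icc]; omega
    · intro a ha
      simp only [Finset.mem_Icc] at ha
      simp only [Finset.mem_Icc]; omega
    · intro a _
      show a + 1 - 1 = a; omega
    · intro a ha
      simp only [Finset.mem_Icc] at ha
      show a - 1 + 1 = a; omega
    · intro m hm
      simp only [Finset.mem_Icc] at hm
      have hang : (((m+1:ℕ):ℝ)-1)*π/(k:ℝ) = (m:ℝ)*π/(k:ℝ) := by push_cast; ring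
      have hθ1 : 0 ≤ (((m+1:ℕ):ℝ)-1)*π/(k:ℝ) := by
        rw [hang]; positivity
      have hθ2 : (((m+1:ℕ):ℝ)-1)*π/(k:ℝ) ≤ π := by
        rw [hang, div_le_iff₀ hkpos]
        have : (m:ℝ) ≤ (k:ℝ) := by exact_mod_cast (by omega : m ≤ k)
        nlinarith
      have hsin : 0 ≤ Real.sin ((m:ℝ)*π/(k:ℝ)) :=
        Real.sin_nonneg_of_nonneg_of_le_pi (hang ▸ hθ1) (hang ▸ hθ2)
      rw [xpt_norm N k hN r h y'' (m+1) hθ1 hθ2 (by positivity), hang, ← hρdef]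
      show (2*ρ)^(-s) * ((k:ℝ) * Real.sin ((m:ℝ) * π / k))^(-s)
        = (k:ℝ)^(-s) * (2 * ρ * Real.sin ((m:ℝ)*π/(k:ℝ)))^(-s)
      rw [Real.mul_rpow (by positivity) hsin, Real.mul_rpow (by positivity) hsin]
      ring
  rw [step1, step2, ← step3, ← step4]
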